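/- Let p and q be distinct primes and set F(t) = Φ_{pq}(t)·Φ_{p²q}(t)·Φ_{pq²}(t) and G(t) = Φ_{p²q²}(t)·Φ_{pq}(t)·Φ_{pq}(t) in ℤ[t]. Then for every unit v of ℤ̂, the ideals (F(t)) and (G(t^v)) of ℤ̂[[t^ℤ̂]] are distinct; likewise, for f(t) = F(t)²G(t) and g(t) = F(t)G(t)², the ideals (f(t)) and (g(t^v)) of ℤ̂[[t^ℤ̂]] are distinct for every unit v of ℤ̂. -/

import Mathlib

open Polynomial

set_option synthInstance.maxHeartbeats 1000000
set_option maxHeartbeats 1000000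

noncomputable section
noncomputable section

/-- The ring of profinite integers `ẐZ = lim_n ℤ/nℤ`, realized as the subring of
`∏ n : ℕ+, ZMod n` consisting of families compatible under the natural projections. -/
def ZHatSubring : Subring (∀ n : ℕ+, ZMod n) where
  carrier := {f | ∀ (m n : ℕ+) (h : (m : ℕ) ∣ (n : ℕ)), ZMod.castHom h (ZMod m) (f n) = f m}
  mul_mem' := fun {a b} ha hb m n h => by
    simp only [Pi.mul_apply, map_mul, ha m n h, hb m n h]
  one_mem' := fun m n h => map_one _
  add_mem' := fun {a b} ha hb m n h => by
    simp only [Pi.add_apply, map_add, ha m n h, hb m n h]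
  zero_mem' := fun m n h => map_zero _
  neg_mem' := fun {a} ha m n h => by
    simp only [Pi.neg_apply, map_neg, ha m n h]

/-- The profinite integers as a type. -/
abbrev ZHat : Type := ZHatSubring

instance : CommRing ZHat := inferInstance

/-- The quotient ring `R[t]/(tⁿ - 1)`. -/
abbrev CycModN (R : Type) [CommRing R] (n : ℕ+) : Type :=
  Polynomial R ⧸ Ideal.span {(X : Polynomial R) ^ (n : ℕ) - 1}

lemma X_pow_sub_one_dvd {R : Type} [CommRing R] {m n : ℕ} (h : m ∣ n) :
    (X : Polynomial R) ^ m - 1 ∣ (X : Polynomial R) ^ n - 1 := by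
  obtain ⟨k, rfl⟩ := h
  simpa [pow_mul] using sub_dvd_pow_sub_pow ((X : Polynomial R) ^ m) 1 k

/-- The natural transition map `R[t]/(tⁿ-1) → R[t]/(tᵐ-1)` for `m ∣ n`. -/
def cycTransition (R : Type) [CommRing R] {m n : ℕ+} (h : (m : ℕ) ∣ (n : ℕ)) :
    CycModN R n →+* CycModN R m :=
  Ideal.Quotient.factor
    (Ideal.span_singleton_le_span_singleton.mpr (X_pow_sub_one_dvd h))

/-- The completed group ring `R[[t^Ẑ]] = lim_n R[t]/(tⁿ-1)`, realized as the subring of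
`∏ n : ℕ+, R[t]/(tⁿ-1)` of families compatible under the transition maps. -/
def CompletedCycRing (R : Type) [CommRing R] : Subring (∀ n : ℕ+, CycModN R n) where
  carrier := {f | ∀ (m n : ℕ+) (h : (m : ℕ) ∣ (n : ℕ)), cycTransition R h (f n) = f m}
  mul_mem' := fun {a b} ha hb m n h => by
    simp only [Pi.mul_apply, map_mul, ha m n h, hb m n h]
  one_mem' := fun m n h => map_one _
  add_mem' := fun {a b} ha hb m n h => by
    simp only [Pi.add_apply, map_add, ha m n h, hb m n h]
  zero_mem' := fun m n h => map_zero _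
  neg_mem' := fun {a} ha m n h => by
    simp only [Pi.neg_apply, map_neg, ha m n h]

instance completedCycRingCommRing (R : Type) [CommRing R] :
    CommRing (CompletedCycRing R) := inferInstance

/-- The natural ring homomorphism `R[t] → R[[t^Ẑ]]`, `f ↦ (f mod (tⁿ-1))ₙ`. -/
def polyToCompleted (R : Type) [CommRing R] : Polynomial R →+* CompletedCycRing R :=
  RingHom.codRestrict (Pi.ringHom fun n => Ideal.Quotient.mk _) _
    (fun f m n h => by
      first
        | exact Ideal.Quotient.factor_mk _ _
        | rfl
        | simp [cycTransition, RingHom.pi_apply])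

/-- The natural ring homomorphism `ℤ[t] → R[[t^Ẑ]]`. -/
def intPolyEmb (R : Type) [CommRing R] : Polynomial ℤ →+* CompletedCycRing R :=
  (polyToCompleted R).comp (Polynomial.mapRingHom (Int.castRingHom R))


/-- The image of `t` in `R[t]/(tⁿ-1)`. -/
def tGen (R : Type) [CommRing R] (n : ℕ+) : CycModN R n :=
  Ideal.Quotient.mk _ X

lemma tGen_pow_eq_one (R : Type) [CommRing R] (n : ℕ+) : (tGen R n) ^ (n : ℕ) = 1 := by
  have h : (Ideal.Quotient.mk (Ideal.span {(X : Polynomial R) ^ (n : ℕ) - 1}))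
      ((X : Polynomial R) ^ (n : ℕ) - 1) = 0 :=
    Ideal.Quotient.eq_zero_iff_mem.mpr (Ideal.subset_span rfl)
  simpa [tGen, map_sub, map_pow, sub_eq_zero] using h

lemma cycTransition_tGen (R : Type) [CommRing R] {m n : ℕ+} (h : (m : ℕ) ∣ (n : ℕ)) :
    cycTransition R h (tGen R n) = tGen R m :=
  Ideal.Quotient.factor_mk _ _

/-- For `v ∈ Ẑ` and `g ∈ ℤ[t]`, the element `g(t^v)` of `R[[t^Ẑ]]`, whose `n`-th component is
`g(t^{v_n}) mod (tⁿ-1)`, where `v ≡ v_n (mod n)`. -/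
def substPow (R : Type) [CommRing R] (v : ZHat) (g : Polynomial ℤ) : CompletedCycRing R :=
  ⟨fun n => Polynomial.aeval ((tGen R n) ^ ((v.1 n).val)) g, by
    intro m n h
    haveI : NeZero (m : ℕ) := ⟨m.ne_zero⟩
    haveI : NeZero (n : ℕ) := ⟨n.ne_zero⟩
    have hcomm : cycTransition R h (Polynomial.aeval ((tGen R n) ^ ((v.1 n).val)) g)
        = Polynomial.aeval (cycTransition R h ((tGen R n) ^ ((v.1 n).val))) g :=
      (Polynomial.aeval_algHom_apply ((cycTransition R h).toIntAlgHom) _ g).symm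
    have hval : ((v.1 n).val) % (m : ℕ) = ((v.1 m).val) % (m : ℕ) := by
      have hv := v.2 m n h
      have h2 : (v.1 m) = (((v.1 n).val : ℕ) : ZMod (m : ℕ)) := by
        rw [← hv, ZMod.castHom_apply, ← ZMod.natCast_val]
      rw [h2, ZMod.val_natCast]
      exact (Nat.mod_mod_of_dvd _ dvd_rfl).symm
    have hpow : (tGen R m) ^ ((v.1 n).val) = (tGen R m) ^ ((v.1 m).val) := by
      rw [pow_eq_pow_mod _ (tGen_pow_eq_one R m), hval,
        ← pow_eq_pow_mod _ (tGen_pow_eq_one R m)]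
    rw [hcomm, map_pow, cycTransition_tGen, hpow]⟩

/-!
Project to level `n` of the completed group ring and reduce coefficients mod `2`. In
`𝔽₂[t]/(tⁿ - 1)` a monic `c` dividing `tⁿ - 1` generates an ideal of index `2 ^ deg c`, and
`t ↦ t^v` is a ring automorphism, so equal ideals `(a(t)) = (b(t^v))` force `deg a = deg b`.
Every factor of Fried's polynomials is a `Φ_d` with `d ∣ p²q²`, so by Frobenius their reductions
divide `(t^{p²q²} - 1)^{2ʲ} = t^{2ʲp²q²} - 1` for large `j`; and the degrees differ, since
`deg G - deg F = φ(pq)·(p - 1)(q - 1)`.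
-/

open Polynomial

def ZHat.toZMod (n : ℕ+) : ZHat →+* ZMod n :=
  (Pi.evalRingHom (fun m : ℕ+ => ZMod m) n).comp ZHatSubring.subtype

section LevelReduction

variable {R S : Type} [CommRing R] [CommRing S]

def cycMap (f : R →+* S) (n : ℕ+) : CycModN R n →+* CycModN S n :=
  Ideal.quotientMap _ (mapRingHom f) <| Ideal.span_singleton_le_iff_mem _ |>.mpr <| by
    simp

lemma cycMap_tGen (f : R →+* S) (n : ℕ+) : cycMap f n (tGen R n) = tGen S n := by
  simp [cycMap, tGen]

def levelReduction (f : R →+* S) (n : ℕ+) : CompletedCycRing R →+* CycModN S n :=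
  (cycMap f n).comp ((Pi.evalRingHom _ n).comp (CompletedCycRing R).subtype)

lemma levelReduction_intPolyEmb (f : R →+* S) (n : ℕ+) (a : ℤ[X]) :
    levelReduction f n (intPolyEmb R a) = Ideal.Quotient.mk _ (a.map (Int.castRingHom S)) := by
  change cycMap f n (Ideal.Quotient.mk _ (a.map (Int.castRingHom R))) = _
  rw [cycMap, Ideal.quotientMap_mk, coe_mapRingHom, Polynomial.map_map,
    RingHom.ext_int (f.comp _)]

lemma levelReduction_substPow (f : R →+* S) (n : ℕ+) (v : ZHat) (b : ℤ[X]) :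
    levelReduction f n (substPow R v b) = aeval (tGen S n ^ (ZHat.toZMod n v).val) b := by
  rw [← cycMap_tGen f n, ← map_pow]
  exact (aeval_algHom_apply (cycMap f n).toIntAlgHom _ b).symm

end LevelReduction

section Substitution

variable (k : Type) [CommRing k] (n : ℕ+)

lemma aeval_tGen (c : ℤ[X]) :
    aeval (tGen k n) c = Ideal.Quotient.mk _ (c.map (Int.castRingHom k)) := by
  have hX : aeval (X : k[X]) c = c.map (Int.castRingHom k) := by
    rw [aeval_def, ← eval₂_C_X (p := c.map _), eval₂_map]
    rfl
  rw [← hX]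
  exact aeval_algHom_apply (Ideal.Quotient.mk _).toIntAlgHom X c

lemma tGen_pow_eq_of_natCast_eq {a b : ℕ} (h : (a : ZMod n) = b) :
    tGen k n ^ a = tGen k n ^ b := by
  rw [pow_eq_pow_mod a (tGen_pow_eq_one k n), pow_eq_pow_mod b (tGen_pow_eq_one k n),
    (ZMod.natCast_eq_natCast_iff' a b n).mp h]

def substAlgHom (e : ℕ) : CycModN k n →ₐ[k] CycModN k n :=
  Ideal.Quotient.liftₐ _ (aeval (tGen k n ^ e)) fun a ha => by
    obtain ⟨c, rfl⟩ := Ideal.mem_span_singleton'.mp ha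
    rw [map_mul, map_sub, map_pow, aeval_X, map_one, ← pow_mul, mul_comm e,
      pow_mul, tGen_pow_eq_one, one_pow, sub_self, mul_zero]

lemma substAlgHom_tGen (e : ℕ) : substAlgHom k n e (tGen k n) = tGen k n ^ e :=
  (Ideal.Quotient.lift_mk _ _ _).trans (aeval_X _)

lemma substAlgHom_comp {e e' : ℕ} (h : ((e * e' : ℕ) : ZMod n) = 1) :
    (substAlgHom k n e').comp (substAlgHom k n e) = AlgHom.id k _ := by
  refine Ideal.Quotient.algHom_ext _ (Polynomial.algHom_ext ?_)
  change substAlgHom k n e' (substAlgHom k n e (tGen k n)) = tGen k n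
  rw [substAlgHom_tGen, map_pow, substAlgHom_tGen, ← pow_mul, mul_comm,
    tGen_pow_eq_of_natCast_eq k n (b := 1) (by simpa using h), pow_one]

def substAlgEquiv (u : (ZMod n)ˣ) : CycModN k n ≃ₐ[k] CycModN k n :=
  AlgEquiv.ofAlgHom (substAlgHom k n (u : ZMod n).val)
    (substAlgHom k n ((u⁻¹ : (ZMod n)ˣ) : ZMod n).val)
    (substAlgHom_comp k n (by simp)) (substAlgHom_comp k n (by simp))

lemma substAlgEquiv_aeval_tGen (u : (ZMod n)ˣ) (b : ℤ[X]) :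
    substAlgEquiv k n u (aeval (tGen k n) b) = aeval (tGen k n ^ (u : ZMod n).val) b := by
  rw [← substAlgHom_tGen]
  exact (aeval_algHom_apply (substAlgHom k n _).toIntAlgHom _ b).symm

end Substitution

section Index

variable {k : Type} [CommRing k] (n : ℕ+)

lemma card_quotient_span_mk_of_dvd [Finite k] {c : k[X]} (hc : c.Monic)
    (hdvd : c ∣ X ^ (n : ℕ) - 1) :
    Nat.card (CycModN k n ⧸ Ideal.span {Ideal.Quotient.mk _ c}) = Nat.card k ^ c.natDegree := by
  set I : Ideal k[X] := Ideal.span {X ^ (n : ℕ) - 1}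
  have hspan :
      Ideal.span {Ideal.Quotient.mk I c} = (Ideal.span {c}).map (Ideal.Quotient.mk I) := by
    rw [Ideal.map_span, Set.image_singleton]
  have hsup : I ⊔ Ideal.span {c} = Ideal.span {c} :=
    sup_eq_right.mpr (Ideal.span_singleton_le_span_singleton.mpr hdvd)
  let e : CycModN k n ⧸ Ideal.span {Ideal.Quotient.mk I c} ≃+* AdjoinRoot c :=
    (Ideal.quotEquivOfEq hspan).trans
      ((DoubleQuot.quotQuotEquivQuotSup I _).trans (Ideal.quotEquivOfEq hsup))
  rw [Nat.card_congr e.toEquiv,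
    Nat.card_congr (AdjoinRoot.powerBasis' hc).basis.equivFun.toEquiv, Nat.card_fun, Nat.card_fin,
    AdjoinRoot.powerBasis'_dim]

lemma card_quotient_span_map_ringEquiv {A : Type} [CommRing A] (σ : A ≃+* A) (x : A) :
    Nat.card (A ⧸ Ideal.span {σ x}) = Nat.card (A ⧸ Ideal.span {x}) :=
  Nat.card_congr <| .symm <|
    (Ideal.quotientEquiv _ _ σ (by rw [Ideal.map_span, Set.image_singleton]; rfl)).toEquiv

end Index

theorem span_intPolyEmb_ne_span_substPow {R k : Type} [CommRing R] [CommRing k] [Finite k]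
    [Nontrivial k] (ρ : R →+* k) (n : ℕ+) {a b : ℤ[X]} (ha : a.Monic) (hb : b.Monic)
    (hda : a.map (Int.castRingHom k) ∣ X ^ (n : ℕ) - 1)
    (hdb : b.map (Int.castRingHom k) ∣ X ^ (n : ℕ) - 1)
    (hdeg : a.natDegree ≠ b.natDegree) (v : ZHatˣ) :
    Ideal.span {intPolyEmb R a} ≠ Ideal.span {substPow R (v : ZHat) b} := by
  intro h
  let u : (ZMod n)ˣ := Units.map (ZHat.toZMod n) v
  have hreduced := congrArg (Ideal.map (levelReduction ρ n)) h
  simp only [Ideal.map_span, Set.image_singleton, levelReduction_intPolyEmb,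
    levelReduction_substPow] at hreduced
  change _ = Ideal.span {aeval (tGen k n ^ (u : ZMod n).val) b} at hreduced
  rw [← substAlgEquiv_aeval_tGen, aeval_tGen] at hreduced
  have hcard := card_quotient_span_map_ringEquiv (substAlgEquiv k n u).toRingEquiv
    (Ideal.Quotient.mk _ (b.map (Int.castRingHom k)))
  rw [AlgEquiv.coe_ringEquiv, ← hreduced, card_quotient_span_mk_of_dvd n (ha.map _) hda,
    card_quotient_span_mk_of_dvd n (hb.map _) hdb, ha.natDegree_map, hb.natDegree_map] at hcard
  exact hdeg (Nat.pow_right_injective (Finite.one_lt_card_iff_nontrivial.mpr ‹_›) hcard)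

lemma map_dvd_X_pow_sub_one_of_dvd_pow {k : Type} [CommRing k] (p : ℕ) [Fact p.Prime]
    [CharP k p] {c : ℤ[X]} {m j : ℕ} (h : c ∣ (X ^ m - 1) ^ j) :
    c.map (Int.castRingHom k) ∣ X ^ (p ^ j * m) - 1 :=
  calc c.map (Int.castRingHom k) ∣ (X ^ m - 1) ^ j := by
        simpa using map_dvd (mapRingHom (Int.castRingHom k)) h
    _ ∣ (X ^ m - 1) ^ p ^ j := pow_dvd_pow _ (Nat.lt_pow_self (Fact.out : p.Prime).one_lt).le
    _ = X ^ (p ^ j * m) - 1 := by rw [sub_pow_char_pow, one_pow, ← pow_mul, mul_comm]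

theorem span_intPolyEmb_ne_span_substPow_of_dvd_pow {a b : ℤ[X]} (ha : a.Monic) (hb : b.Monic)
    {m j : ℕ} (hm : 0 < m) (hda : a ∣ (X ^ m - 1) ^ j) (hdb : b ∣ (X ^ m - 1) ^ j)
    (hdeg : a.natDegree ≠ b.natDegree) (v : ZHatˣ) :
    Ideal.span {intPolyEmb ZHat a} ≠ Ideal.span {substPow ZHat (v : ZHat) b} :=
  span_intPolyEmb_ne_span_substPow (k := ZMod 2) (ZHat.toZMod 2) ⟨2 ^ j * m, by positivity⟩
    ha hb (map_dvd_X_pow_sub_one_of_dvd_pow 2 hda) (map_dvd_X_pow_sub_one_of_dvd_pow 2 hdb) hdeg v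

lemma Polynomial.Monic.natDegree_sq_mul_ne {R : Type} [CommSemiring R] {a b : R[X]}
    (ha : a.Monic) (hb : b.Monic) (h : a.natDegree ≠ b.natDegree) :
    (a ^ 2 * b).natDegree ≠ (a * b ^ 2).natDegree := by
  rw [(ha.pow 2).natDegree_mul hb, ha.natDegree_mul (hb.pow 2), ha.natDegree_pow, hb.natDegree_pow]
  omega

lemma cyclotomic_dvd_X_pow_sub_one_of_dvd (R : Type) [CommRing R] {d m : ℕ} (h : d ∣ m) :
    cyclotomic d R ∣ X ^ m - 1 :=
  (cyclotomic.dvd_X_pow_sub_one d R).trans (X_pow_sub_one_dvd h)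

lemma Nat.totient_prime_sq_mul {p : ℕ} (hp : p.Prime) (n : ℕ) :
    Nat.totient (p ^ 2 * n) = p * Nat.totient (p * n) := by
  rw [pow_two, mul_assoc, Nat.totient_mul_of_prime_of_dvd hp (dvd_mul_right p n)]

section FriedPair

open Nat

variable (p q : ℕ)

def friedF : ℤ[X] :=
  cyclotomic (p * q) ℤ * cyclotomic (p ^ 2 * q) ℤ * cyclotomic (p * q ^ 2) ℤ

def friedG : ℤ[X] :=
  cyclotomic (p ^ 2 * q ^ 2) ℤ * cyclotomic (p * q) ℤ * cyclotomic (p * q) ℤ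

lemma friedF_monic : (friedF p q).Monic :=
  ((cyclotomic.monic _ _).mul (cyclotomic.monic _ _)).mul (cyclotomic.monic _ _)

lemma friedG_monic : (friedG p q).Monic :=
  ((cyclotomic.monic _ _).mul (cyclotomic.monic _ _)).mul (cyclotomic.monic _ _)

lemma friedF_dvd : friedF p q ∣ (X ^ (p ^ 2 * q ^ 2) - 1) ^ 3 := by
  rw [pow_three']
  exact mul_dvd_mul (mul_dvd_mul
    (cyclotomic_dvd_X_pow_sub_one_of_dvd ℤ (Dvd.intro (p * q) (by ring)))
    (cyclotomic_dvd_X_pow_sub_one_of_dvd ℤ (Dvd.intro q (by ring))))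
    (cyclotomic_dvd_X_pow_sub_one_of_dvd ℤ (Dvd.intro p (by ring)))

lemma friedG_dvd : friedG p q ∣ (X ^ (p ^ 2 * q ^ 2) - 1) ^ 3 := by
  have hpq := cyclotomic_dvd_X_pow_sub_one_of_dvd ℤ (Dvd.intro (p * q) (by ring) :
    p * q ∣ p ^ 2 * q ^ 2)
  rw [pow_three']
  exact mul_dvd_mul (mul_dvd_mul (cyclotomic_dvd_X_pow_sub_one_of_dvd ℤ dvd_rfl) hpq) hpq

variable {p q}

lemma natDegree_friedF (hp : p.Prime) (hq : q.Prime) :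
    (friedF p q).natDegree = (1 + p + q) * φ (p * q) := by
  have hq' : φ (p * q ^ 2) = q * φ (p * q) := by
    rw [mul_comm p, totient_prime_sq_mul hq, mul_comm q p]
  simp [friedF, natDegree_mul, cyclotomic_ne_zero, natDegree_cyclotomic,
    totient_prime_sq_mul hp, hq']
  ring

lemma natDegree_friedG (hp : p.Prime) (hq : q.Prime) :
    (friedG p q).natDegree = (p * q + 2) * φ (p * q) := by
  have hq' : φ (p * q ^ 2) = q * φ (p * q) := by
    rw [mul_comm p, totient_prime_sq_mul hq, mul_comm q p]
  simp [friedG, natDegree_mul, cyclotomic_ne_zero, natDegree_cyclotomic,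
    totient_prime_sq_mul hp, hq']
  ring

lemma natDegree_friedF_ne_natDegree_friedG (hp : p.Prime) (hq : q.Prime) :
    (friedF p q).natDegree ≠ (friedG p q).natDegree := by
  have hφ : 0 < φ (p * q) := totient_pos.mpr (mul_pos hp.pos hq.pos)
  rw [natDegree_friedF hp hq, natDegree_friedG hp hq]
  intro h
  have := Nat.eq_of_mul_eq_mul_right hφ h
  nlinarith [hp.two_le, hq.two_le]

end FriedPair

theorem fried_pair_span_ne_general
    (p q : ℕ) (hp : p.Prime) (hq : q.Prime)
    (F G : Polynomial ℤ)
    (hF : F = cyclotomic (p * q) ℤ * cyclotomic (p ^ 2 * q) ℤ * cyclotomic (p * q ^ 2) ℤ)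
    (hG : G = cyclotomic (p ^ 2 * q ^ 2) ℤ * cyclotomic (p * q) ℤ * cyclotomic (p * q) ℤ) :
    (∀ v : ZHatˣ,
      Ideal.span {intPolyEmb ZHat F} ≠ Ideal.span {substPow ZHat (v : ZHat) G}) ∧
    (∀ v : ZHatˣ,
      Ideal.span {intPolyEmb ZHat (F ^ 2 * G)}
        ≠ Ideal.span {substPow ZHat (v : ZHat) (F * G ^ 2)}) := by
  obtain rfl : F = friedF p q := hF
  obtain rfl : G = friedG p q := hG
  have hm : 0 < p ^ 2 * q ^ 2 := by have := hp.pos; have := hq.pos; positivity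
  have hF := friedF_monic p q
  have hG := friedG_monic p q
  have hFdvd := friedF_dvd p q
  have hGdvd := friedG_dvd p q
  have hdeg := natDegree_friedF_ne_natDegree_friedG hp hq
  refine ⟨span_intPolyEmb_ne_span_substPow_of_dvd_pow hF hG hm hFdvd hGdvd hdeg,
    span_intPolyEmb_ne_span_substPow_of_dvd_pow ((hF.pow 2).mul hG) (hF.mul (hG.pow 2)) hm
      (j := 9) ?_ ?_ (hF.natDegree_sq_mul_ne hG hdeg)⟩
  · simpa [← pow_mul, ← pow_add] using mul_dvd_mul (pow_dvd_pow_of_dvd hFdvd 2) hGdvd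
  · simpa [← pow_mul, ← pow_add] using mul_dvd_mul hFdvd (pow_dvd_pow_of_dvd hGdvd 2)

/-- For distinct primes `p, q` and Fried's pair
`F(t) = Φ_{pq}(t)Φ_{p²q}(t)Φ_{pq²}(t)`, `G(t) = Φ_{p²q²}(t)Φ_{pq}(t)Φ_{pq}(t)`:
for every unit `v` of `Ẑ` the ideals `(F(t))` and `(G(t^v))` of `Ẑ[[t^Ẑ]]` are distinct,
and likewise, with `f = F²G` and `g = FG²`, the ideals `(f(t))` and `(g(t^v))` are
distinct. -/
theorem fried_pair_span_ne
    (p q : ℕ) (hp : p.Prime) (hq : q.Prime) (hpq : p ≠ q)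
    (F G : Polynomial ℤ)
    (hF : F = cyclotomic (p * q) ℤ * cyclotomic (p ^ 2 * q) ℤ * cyclotomic (p * q ^ 2) ℤ)
    (hG : G = cyclotomic (p ^ 2 * q ^ 2) ℤ * cyclotomic (p * q) ℤ * cyclotomic (p * q) ℤ) :
    (∀ v : ZHatˣ,
      Ideal.span {intPolyEmb ZHat F} ≠ Ideal.span {substPow ZHat (v : ZHat) G}) ∧
    (∀ v : ZHatˣ,
      Ideal.span {intPolyEmb ZHat (F ^ 2 * G)}
        ≠ Ideal.span {substPow ZHat (v : ZHat) (F * G ^ 2)}) :=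
  fried_pair_span_ne_general p q hp hq F G hF hG
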